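/- arXiv:2202.06187 — 3 statements merged into one kernel-verified Lean document; each statement's English description precedes it below -/
import Mathlib

section
/- Let E be a real inner product space, m, K, Q positive natural numbers, λ : Fin m → ℝ strictly positive weights, and U ≥ 0. Consider sequences r : ℕ → Fin m → Fin K (assignments), Ω : ℕ → Fin K → E (centroids), ω : ℕ → Fin m → E (client parameters), and per-round learning rates η : ℕ → Fin m → ℝ with η t i ≥ 0, satisfying for every round t: (E-step) for all i and k, ‖ω t i − Ω t (r (t+1) i)‖ ≤ ‖ω t i − Ω t k‖; (M-step) every cluster is nonempty under r (t+1), and Ω (t+1) k is the λ-weighted mean of {ω t i : r (t+1) i = k}; (Local step) for each i there exist vectors g_{i,0}, …, g_{i,Q−1} ∈ E with ‖g_{i,q}‖ ≤ U such that ω (t+1) i = Ω (t+1) (r (t+1) i) − (η t i) • ∑_{q<Q} g_{i,q}, and the learning rate satisfies η t i · Q · U ≤ ‖ω t i − Ω (t+1) (r (t+1) i)‖. Define F t := (∑_j λ j)⁻¹ · ∑_i λ i · ‖ω t i − Ω t (r t i)‖². Then F is nonincreasing (F (t+1) ≤ F t for all t), and F converges: there exists c ≥ 0 such that F t tends to c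 as t → ∞. -/
/-!
Each of the three steps of a round can only decrease the weighted cost: the local update moves a
client by at most `η Q U`, hence no farther from its centroid than it was before; the new centroid
of a cluster is its weighted centre of mass, which minimises the weighted sum of squared distances
by the parallel axis identity; and the E-step picks a nearest centroid for every client. So `F` is
nonincreasing, and being bounded below by `0` it converges to its infimum.
-/

open Finset

section WeightedCost

variable {E : Type*} [NormedAddCommGroup E]

section CenterMass

variable [InnerProductSpace ℝ E] {ι : Type*} {s : Finset ι} {w : ι → ℝ}

theorem Finset.sum_mul_norm_sub_sq_eq_add_centerMass (hw : ∑ i ∈ s, w i ≠ 0) (x : ι → E) (c : E) :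
    ∑ i ∈ s, w i * ‖x i - c‖ ^ 2 =
      ∑ i ∈ s, w i * ‖x i - s.centerMass w x‖ ^ 2 +
        (∑ i ∈ s, w i) * ‖s.centerMass w x - c‖ ^ 2 := by
  set μ := s.centerMass w x
  have hbalance : ∑ i ∈ s, w i • (x i - μ) = 0 := by
    simp only [smul_sub, sum_sub_distrib, ← sum_smul]
    rw [show μ = (∑ i ∈ s, w i)⁻¹ • ∑ i ∈ s, w i • x i from rfl, smul_smul, mul_inv_cancel₀ hw,
      one_smul, sub_self]
  have hcross : ∑ i ∈ s, w i * inner ℝ (x i - μ) (μ - c) = 0 := by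
    simp only [← real_inner_smul_left, ← sum_inner, hbalance, inner_zero_left]
  have hsplit : ∀ i, ‖x i - c‖ ^ 2 = ‖x i - μ‖ ^ 2 + 2 * inner ℝ (x i - μ) (μ - c) + ‖μ - c‖ ^ 2 :=
    fun i => by rw [← norm_add_sq_real, sub_add_sub_cancel]
  simp only [hsplit, mul_add, sum_add_distrib, mul_left_comm _ (2 : ℝ), ← mul_sum, hcross,
    ← sum_mul]
  ring

theorem Finset.sum_mul_norm_sub_centerMass_sq_le (hw : 0 < ∑ i ∈ s, w i) (x : ι → E) (c : E) :
    ∑ i ∈ s, w i * ‖x i - s.centerMass w x‖ ^ 2 ≤ ∑ i ∈ s, w i * ‖x i - c‖ ^ 2 := by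
  rw [sum_mul_norm_sub_sq_eq_add_centerMass hw.ne' x c]
  exact le_add_of_nonneg_right (by positivity)

end CenterMass

section ClusteringCost

variable {ι κ : Type*} [Fintype ι]

def clusteringCost (w : ι → ℝ) (x : ι → E) (r : ι → κ) (c : κ → E) : ℝ :=
  ∑ i, w i * ‖x i - c (r i)‖ ^ 2

theorem clusteringCost_nonneg {w : ι → ℝ} (hw : ∀ i, 0 ≤ w i) (x : ι → E) (r : ι → κ)
    (c : κ → E) : 0 ≤ clusteringCost w x r c :=
  sum_nonneg fun i _ => mul_nonneg (hw i) (sq_nonneg _)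

theorem clusteringCost_le_of_norm_le {w : ι → ℝ} (hw : ∀ i, 0 ≤ w i) {x x' : ι → E}
    {r r' : ι → κ} {c c' : κ → E} (h : ∀ i, ‖x i - c (r i)‖ ≤ ‖x' i - c' (r' i)‖) :
    clusteringCost w x r c ≤ clusteringCost w x' r' c' :=
  sum_le_sum fun i _ => mul_le_mul_of_nonneg_left (pow_le_pow_left₀ (norm_nonneg _) (h i) 2) (hw i)

theorem clusteringCost_centerMass_le [InnerProductSpace ℝ E] [Fintype κ] [DecidableEq κ]
    {w : ι → ℝ} (hw : ∀ i, 0 < w i) (x : ι → E) (r : ι → κ) {Ω : κ → E}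
    (hΩ : ∀ k, Ω k = ({i | r i = k} : Finset ι).centerMass w x) (c : κ → E) :
    clusteringCost w x r Ω ≤ clusteringCost w x r c := by
  unfold clusteringCost
  rw [← sum_fiberwise univ r, ← sum_fiberwise univ r]
  refine sum_le_sum fun k _ => ?_
  have hfiber : ∀ c : κ → E, ∑ i with r i = k, w i * ‖x i - c (r i)‖ ^ 2 =
      ∑ i with r i = k, w i * ‖x i - c k‖ ^ 2 :=
    fun c => sum_congr rfl fun i hi => by rw [(mem_filter.1 hi).2]
  rw [hfiber, hfiber, hΩ]
  obtain hempty | hne := ({i | r i = k} : Finset ι).eq_empty_or_nonempty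
  · simp only [hempty, sum_empty, le_refl]
  · exact sum_mul_norm_sub_centerMass_sq_le (sum_pos (fun i _ => hw i) hne) x (c k)

end ClusteringCost

theorem norm_smul_sum_le_of_norm_le [NormedSpace ℝ E] {ι : Type*} {s : Finset ι} {g : ι → E}
    {η U : ℝ} (hη : 0 ≤ η) (hg : ∀ q ∈ s, ‖g q‖ ≤ U) : ‖η • ∑ q ∈ s, g q‖ ≤ η * #s * U := by
  rw [norm_smul, Real.norm_of_nonneg hη, mul_assoc]
  gcongr
  simpa using norm_sum_le_of_le s hg

end WeightedCost

theorem wecfl_clustering_objective_converges_general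
    {E : Type*} [NormedAddCommGroup E] [InnerProductSpace ℝ E]
    {m K Q : ℕ}
    (lam : Fin m → ℝ) (hlam : ∀ i, 0 < lam i)
    (U : ℝ)
    (r : ℕ → Fin m → Fin K) (Ω : ℕ → Fin K → E) (ω : ℕ → Fin m → E)
    (η : ℕ → Fin m → ℝ) (hη : ∀ t i, 0 ≤ η t i)
    -- Expectation step: each client is assigned to a nearest centroid
    (hE : ∀ t (i : Fin m) (k : Fin K),
      ‖ω t i - Ω t (r (t + 1) i)‖ ≤ ‖ω t i - Ω t k‖)
    -- ... and the new centroid is the λ-weighted mean of its clients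
    (hM : ∀ t (k : Fin K), Ω (t + 1) k =
      (∑ i ∈ Finset.univ.filter (fun i => r (t + 1) i = k), lam i)⁻¹ •
        ∑ i ∈ Finset.univ.filter (fun i => r (t + 1) i = k), lam i • ω t i)
    -- Local update step: Q bounded-gradient steps from the centroid, with
    -- learning rate η t i · Q · U ≤ ‖ω t i − Ω (t+1) (r (t+1) i)‖
    (hL : ∀ t (i : Fin m), ∃ g : Fin Q → E, (∀ q, ‖g q‖ ≤ U) ∧
      ω (t + 1) i = Ω (t + 1) (r (t + 1) i) - η t i • ∑ q, g q ∧
      η t i * Q * U ≤ ‖ω t i - Ω (t + 1) (r (t + 1) i)‖)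
    (F : ℕ → ℝ)
    (hF : ∀ t, F t = (∑ j, lam j)⁻¹ * ∑ i, lam i * ‖ω t i - Ω t (r t i)‖ ^ 2) :
    (∀ t, F (t + 1) ≤ F t) ∧
      ∃ c : ℝ, 0 ≤ c ∧ Filter.Tendsto F Filter.atTop (nhds c) := by
  have hlam₀ : ∀ i, 0 ≤ lam i := fun i => (hlam i).le
  have hF' : ∀ t, F t = (∑ j, lam j)⁻¹ * clusteringCost lam (ω t) (r t) (Ω t) := hF
  have hnormalizer : 0 ≤ (∑ j, lam j)⁻¹ := inv_nonneg.2 (sum_nonneg fun i _ => hlam₀ i)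
  have hF₀ : ∀ t, 0 ≤ F t := fun t => by
    rw [hF']
    exact mul_nonneg hnormalizer (clusteringCost_nonneg hlam₀ ..)
  have hlocal : ∀ t i, ‖ω (t + 1) i - Ω (t + 1) (r (t + 1) i)‖ ≤
      ‖ω t i - Ω (t + 1) (r (t + 1) i)‖ := fun t i => by
    obtain ⟨g, hg, hω, hη_le⟩ := hL t i
    rw [hω, sub_sub_cancel_left, norm_neg]
    have hstep_le := norm_smul_sum_le_of_norm_le (s := univ) (hη t i) fun q _ => hg q
    rw [card_univ, Fintype.card_fin] at hstep_le
    exact hstep_le.trans hη_le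
  have hstep : ∀ t, F (t + 1) ≤ F t := fun t => by
    rw [hF', hF']
    gcongr
    calc clusteringCost lam (ω (t + 1)) (r (t + 1)) (Ω (t + 1))
        ≤ clusteringCost lam (ω t) (r (t + 1)) (Ω (t + 1)) :=
          clusteringCost_le_of_norm_le hlam₀ (hlocal t)
      _ ≤ clusteringCost lam (ω t) (r (t + 1)) (Ω t) :=
          clusteringCost_centerMass_le hlam (ω t) (r (t + 1)) (hM t) (Ω t)
      _ ≤ clusteringCost lam (ω t) (r t) (Ω t) :=
          clusteringCost_le_of_norm_le hlam₀ fun i => hE t i (r t i)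
  refine ⟨hstep, ⨅ t, F t, le_ciInf hF₀, ?_⟩
  exact tendsto_atTop_ciInf (antitone_nat_of_succ_le hstep) ⟨0, Set.forall_mem_range.2 hF₀⟩

/-- Theorem 1 of the paper: convergence of the weighted clustering objective F
of WeCFL.  Under the E-step (nearest-centroid assignment), M-step (weighted-mean
aggregation) and local update step with bounded gradients and learning rate
η t i ≤ ‖ω t i − Ω_k‖/(Q U), the objective F is nonincreasing and converges. -/
theorem wecfl_clustering_objective_converges
    {E : Type*} [NormedAddCommGroup E] [InnerProductSpace ℝ E]
    {m K Q : ℕ} (hm : 0 < m) (hK : 0 < K) (hQ : 0 < Q)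
    (lam : Fin m → ℝ) (hlam : ∀ i, 0 < lam i)
    (U : ℝ) (hU : 0 ≤ U)
    (r : ℕ → Fin m → Fin K) (Ω : ℕ → Fin K → E) (ω : ℕ → Fin m → E)
    (η : ℕ → Fin m → ℝ) (hη : ∀ t i, 0 ≤ η t i)
    -- Expectation step: each client is assigned to a nearest centroid
    (hE : ∀ t (i : Fin m) (k : Fin K),
      ‖ω t i - Ω t (r (t + 1) i)‖ ≤ ‖ω t i - Ω t k‖)
    -- Maximization step: every cluster is nonempty ...
    (hMne : ∀ t (k : Fin K), ∃ i : Fin m, r (t + 1) i = k)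
    -- ... and the new centroid is the λ-weighted mean of its clients
    (hM : ∀ t (k : Fin K), Ω (t + 1) k =
      (∑ i ∈ Finset.univ.filter (fun i => r (t + 1) i = k), lam i)⁻¹ •
        ∑ i ∈ Finset.univ.filter (fun i => r (t + 1) i = k), lam i • ω t i)
    -- Local update step: Q bounded-gradient steps from the centroid, with
    -- learning rate η t i · Q · U ≤ ‖ω t i − Ω (t+1) (r (t+1) i)‖
    (hL : ∀ t (i : Fin m), ∃ g : Fin Q → E, (∀ q, ‖g q‖ ≤ U) ∧
      ω (t + 1) i = Ω (t + 1) (r (t + 1) i) - η t i • ∑ q, g q ∧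
      η t i * Q * U ≤ ‖ω t i - Ω (t + 1) (r (t + 1) i)‖)
    (F : ℕ → ℝ)
    (hF : ∀ t, F t = (∑ j, lam j)⁻¹ * ∑ i, lam i * ‖ω t i - Ω t (r t i)‖ ^ 2) :
    (∀ t, F (t + 1) ≤ F t) ∧
      ∃ c : ℝ, 0 ≤ c ∧ Filter.Tendsto F Filter.atTop (nhds c) :=
  wecfl_clustering_objective_converges_general lam hlam U r Ω ω η hη hE hM hL F hF
end

section
/- Let E be a real inner product space, m and Q positive natural numbers, λ : Fin m → ℝ strictly positive weights, Ω ∈ E, η ≥ 0, B ≥ 0, U ≥ 0, and g : Fin m → Fin Q → E vectors with ‖g i q‖ ≤ U for all i, q. For each i set ω i := Ω − η • ∑_{q<Q} g i q, and for each q let ḡ q := (∑_j λ j)⁻¹ • ∑_p λ p • g p q be the weighted average update direction at step q. Assume the clusterability condition: for all i and q, ‖ḡ q − g i q‖ ≤ B · ‖ḡ q‖. Let μ := (∑_j λ j)⁻¹ • ∑_i λ i • ω i be the weighted mean of the updated client parameters. Then for every i, ‖μ − ω i‖ ≤ η · B · Q · U. -/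
/-!
Averaging is affine, so the weighted mean of the updated parameters is the centroid moved by the
averaged directions: `μ = Ω - η • ∑ q, gbar q`. Hence `μ - ω i = η • ∑ q, (g i q - gbar q)`, and
each of the `Q` summands has norm at most `B * ‖gbar q‖ ≤ B * U`, since `gbar q` is a convex
combination of vectors in the closed ball of radius `U`.
-/

open Finset

namespace Finset

section Field

variable {ι κ R E : Type*} [Field R] [AddCommGroup E] [Module R E] (t : Finset ι) (w : ι → R)

theorem centerMass_sub (z z' : ι → E) :
    t.centerMass w (fun i => z i - z' i) = t.centerMass w z - t.centerMass w z' := by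
  simp only [centerMass, smul_sub, sum_sub_distrib]

theorem centerMass_sum_comm (s : Finset κ) (z : ι → κ → E) :
    t.centerMass w (fun i => ∑ q ∈ s, z i q) = ∑ q ∈ s, t.centerMass w (fun i => z i q) := by
  simp only [centerMass, smul_sum]
  exact sum_comm

theorem centerMass_sub_smul_sum (hw : ∑ i ∈ t, w i ≠ 0) (Ω : E) (η : R) (s : Finset κ)
    (g : ι → κ → E) :
    t.centerMass w (fun i => Ω - η • ∑ q ∈ s, g i q)
      = Ω - η • ∑ q ∈ s, t.centerMass w (fun i => g i q) := by
  rw [centerMass_sub, centerMass_smul, centerMass_sum_comm]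
  exact congrArg (· - _) (centerMass_const hw Ω)

end Field

theorem norm_centerMass_le {ι E : Type*} [SeminormedAddCommGroup E] [NormedSpace ℝ E]
    {t : Finset ι} {w : ι → ℝ} {z : ι → E} {U : ℝ} (hw₀ : ∀ i ∈ t, 0 ≤ w i)
    (hw : 0 < ∑ i ∈ t, w i) (hz : ∀ i ∈ t, ‖z i‖ ≤ U) :
    ‖t.centerMass w z‖ ≤ U := by
  simpa using (convex_closedBall (0 : E) U).centerMass_mem hw₀ hw (by simpa using hz)

end Finset

theorem wecfl_clusterability_distance_bound_general
    {E : Type*} [NormedAddCommGroup E] [InnerProductSpace ℝ E]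
    {m Q : ℕ}
    (lam : Fin m → ℝ) (hlam : ∀ i, 0 < lam i)
    (Ω : E) (η B U : ℝ) (hη : 0 ≤ η) (hB : 0 ≤ B)
    (g : Fin m → Fin Q → E) (hg : ∀ i q, ‖g i q‖ ≤ U)
    (ω : Fin m → E) (hω : ∀ i, ω i = Ω - η • ∑ q, g i q)
    (gbar : Fin Q → E)
    (hgbar : ∀ q, gbar q = (∑ j, lam j)⁻¹ • ∑ p, lam p • g p q)
    (hclu : ∀ i q, ‖gbar q - g i q‖ ≤ B * ‖gbar q‖)
    (μ : E) (hμ : μ = (∑ j, lam j)⁻¹ • ∑ i, lam i • ω i) :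
    ∀ i, ‖μ - ω i‖ ≤ η * B * Q * U := by
  intro i
  have hlam_sum : 0 < ∑ j, lam j := sum_pos (fun j _ => hlam j) ⟨i, mem_univ i⟩
  have hgbar_le (q : Fin Q) : ‖gbar q‖ ≤ U := by
    rw [hgbar q]
    exact norm_centerMass_le (fun p _ => (hlam p).le) hlam_sum (fun p _ => hg p q)
  have hμ_eq : μ = Ω - η • ∑ q, gbar q := by
    obtain rfl : ω = _ := funext hω
    obtain rfl : gbar = _ := funext hgbar
    exact hμ.trans (centerMass_sub_smul_sum univ lam hlam_sum.ne' Ω η univ g)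
  have hdiff : μ - ω i = η • ∑ q, (g i q - gbar q) := by
    rw [hμ_eq, hω i, sum_sub_distrib, smul_sub]
    abel
  calc ‖μ - ω i‖ = η * ‖∑ q, (g i q - gbar q)‖ := by
        rw [hdiff, norm_smul, Real.norm_of_nonneg hη]
    _ ≤ η * ∑ _q : Fin Q, B * U := by
        gcongr
        refine norm_sum_le_of_le _ fun q _ => ?_
        rw [norm_sub_rev]
        exact (hclu i q).trans (by gcongr; exact hgbar_le q)
    _ = η * B * Q * U := by
        rw [sum_const, card_univ, Fintype.card_fin, nsmul_eq_mul]
        ring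

/-- Key distance bound inside Lemma 4 of WeCFL: under the clusterability
condition with measure B, each client's locally updated parameter is within
η·B·Q·U of the cluster's weighted mean. -/
theorem wecfl_clusterability_distance_bound
    {E : Type*} [NormedAddCommGroup E] [InnerProductSpace ℝ E]
    {m Q : ℕ} (hm : 0 < m) (hQ : 0 < Q)
    (lam : Fin m → ℝ) (hlam : ∀ i, 0 < lam i)
    (Ω : E) (η B U : ℝ) (hη : 0 ≤ η) (hB : 0 ≤ B) (hU : 0 ≤ U)
    (g : Fin m → Fin Q → E) (hg : ∀ i q, ‖g i q‖ ≤ U)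
    (ω : Fin m → E) (hω : ∀ i, ω i = Ω - η • ∑ q, g i q)
    (gbar : Fin Q → E)
    (hgbar : ∀ q, gbar q = (∑ j, lam j)⁻¹ • ∑ p, lam p • g p q)
    (hclu : ∀ i q, ‖gbar q - g i q‖ ≤ B * ‖gbar q‖)
    (μ : E) (hμ : μ = (∑ j, lam j)⁻¹ • ∑ i, lam i • ω i) :
    ∀ i, ‖μ - ω i‖ ≤ η * B * Q * U :=
  wecfl_clusterability_distance_bound_general lam hlam Ω η B U hη hB g hg ω hω gbar hgbar hclu μ hμ
end

section
/- Let E be a complete real inner product space, m and Q positive natural numbers, λ : Fin m → ℝ strictly positive weights, η ≥ 0, B ≥ 0, U ≥ 0, and Ω ∈ E. For each i : Fin m let f i : E → ℝ be convex and differentiable with gradient ∇f i, and assume ‖∇f i x‖ ≤ U for all x ∈ E (bounded gradients). Each client runs Q gradient descent steps from Ω: ω i 0 := Ω and ω i (q+1) := ω i q − η • ∇f i (ω i q); write ω i := ω i Q. Assume the clusterability condition holds at every local step: for all i and all q < Q, ‖ḡ q − ∇f i (ω i q)‖ ≤ B · ‖ḡ q‖, where ḡ q := (∑_j λ j)⁻¹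 • ∑_p λ p • ∇f p (ω p q). Let μ := (∑_j λ j)⁻¹ • ∑_i λ i • ω i be the weighted mean of the updated parameters. Then (∑_j λ j)⁻¹ · ∑_i λ i · (f i (μ) − f i (ω i)) ≤ η · B · Q · U². -/
/-!
The weighted mean of the client iterates is itself a gradient-descent sequence started at `Ω`,
driven by the averaged gradients `gbar q`. By clusterability each of its `Q` steps deviates from
client `i`'s step by at most `η B U`, so `‖μ - ω i Q‖ ≤ η B Q U`. The first-order inequality of
convexity gives `f i μ - f i (ω i Q) ≤ ⟪∇f i μ, μ - ω i Q⟫ ≤ U ‖μ - ω i Q‖`, and a weighted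
average of quantities bounded by `η B Q U²` is bounded by it as well.
-/

open Finset

theorem ConvexOn.le_sub_of_hasFDerivAt {E : Type*} [NormedAddCommGroup E] [NormedSpace ℝ E]
    {s : Set E} {f : E → ℝ} {f' : E →L[ℝ] ℝ} {x y : E} (hf : ConvexOn ℝ s f)
    (hx : x ∈ s) (hy : y ∈ s) (hf' : HasFDerivAt f f' x) :
    f' (y - x) ≤ f y - f x := by
  set ℓ : ℝ →ᵃ[ℝ] E := AffineMap.lineMap x y
  have hφ : HasDerivAt (f ∘ ℓ) (f' (y - x)) 0 := by
    have : HasFDerivAt f f' (ℓ 0) := by simpa [ℓ] using hf'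
    exact this.comp_hasDerivAt 0 AffineMap.hasDerivAt_lineMap
  have := (hf.comp_affineMap ℓ).le_slope_of_hasDerivAt (by simpa [ℓ] using hx)
    (by simpa [ℓ] using hy) zero_lt_one hφ
  simpa [slope_def_field, ℓ] using this

theorem ConvexOn.sub_le_inner_of_hasGradientAt {E : Type*} [NormedAddCommGroup E]
    [InnerProductSpace ℝ E] [CompleteSpace E] {s : Set E} {f : E → ℝ} {g x y : E}
    (hf : ConvexOn ℝ s f) (hx : x ∈ s) (hy : y ∈ s) (hg : HasGradientAt f g x) :
    f x - f y ≤ inner ℝ g (x - y) := by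
  have := hf.le_sub_of_hasFDerivAt hx hy hg.hasFDerivAt
  rw [InnerProductSpace.toDual_apply_apply, ← neg_sub x y, inner_neg_right] at this
  linarith

theorem Finset.centerMass_sub_s6 {R E ι : Type*} [Field R] [AddCommGroup E] [Module R E]
    (t : Finset ι) (w : ι → R) (z z' : ι → E) :
    t.centerMass w (fun i => z i - z' i) = t.centerMass w z - t.centerMass w z' := by
  simp only [centerMass, smul_sub, sum_sub_distrib]

theorem Finset.norm_centerMass_le_s6 {E ι : Type*} [SeminormedAddCommGroup E] [NormedSpace ℝ E]
    {t : Finset ι} {w : ι → ℝ} {z : ι → E} {r : ℝ} (hw₀ : ∀ i ∈ t, 0 ≤ w i)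
    (hw : 0 < ∑ i ∈ t, w i) (hz : ∀ i ∈ t, ‖z i‖ ≤ r) : ‖t.centerMass w z‖ ≤ r :=
  mem_closedBall_zero_iff.1 <| (convex_closedBall (0 : E) r).centerMass_mem hw₀ hw
    fun i hi => mem_closedBall_zero_iff.2 (hz i hi)

theorem norm_sub_le_of_descent {E : Type*} [SeminormedAddCommGroup E] [NormedSpace ℝ E]
    {x y g h : ℕ → E} {η : ℝ} (hη : 0 ≤ η) (h0 : x 0 = y 0)
    (hx : ∀ q, x (q + 1) = x q - η • g q) (hy : ∀ q, y (q + 1) = y q - η • h q) (n : ℕ) :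
    ‖x n - y n‖ ≤ η * ∑ q ∈ range n, ‖g q - h q‖ := by
  induction n with
  | zero => simp [h0]
  | succ n ih =>
    have hstep : x (n + 1) - y (n + 1) = (x n - y n) - η • (g n - h n) := by
      rw [hx, hy, smul_sub]; abel
    calc ‖x (n + 1) - y (n + 1)‖ ≤ ‖x n - y n‖ + η * ‖g n - h n‖ := by
          rw [hstep]
          exact (norm_sub_le _ _).trans_eq (by rw [norm_smul, Real.norm_of_nonneg hη])
      _ ≤ η * ∑ q ∈ range (n + 1), ‖g q - h q‖ := by
          rw [sum_range_succ, mul_add]; linarith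

theorem wecfl_aggregation_loss_bound_general
    {E : Type*} [NormedAddCommGroup E] [InnerProductSpace ℝ E] [CompleteSpace E]
    {m Q : ℕ} (hm : 0 < m)
    (lam : Fin m → ℝ) (hlam : ∀ i, 0 < lam i)
    (η B U : ℝ) (hη : 0 ≤ η) (hB : 0 ≤ B) (hU : 0 ≤ U)
    (Ω : E)
    (f : Fin m → E → ℝ) (f' : Fin m → E → E)
    (hconv : ∀ i, ConvexOn ℝ Set.univ (f i))
    (hgrad : ∀ i x, HasGradientAt (f i) (f' i x) x)
    (hbdd : ∀ i x, ‖f' i x‖ ≤ U)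
    -- Q gradient descent steps from Ω for each client
    (ω : Fin m → ℕ → E)
    (hω0 : ∀ i, ω i 0 = Ω)
    (hωs : ∀ i q, ω i (q + 1) = ω i q - η • f' i (ω i q))
    -- weighted-average update direction at each step
    (gbar : ℕ → E)
    (hgbar : ∀ q, gbar q = (∑ j, lam j)⁻¹ • ∑ p, lam p • f' p (ω p q))
    -- clusterability condition at every local step
    (hclu : ∀ i : Fin m, ∀ q < Q, ‖gbar q - f' i (ω i q)‖ ≤ B * ‖gbar q‖)
    -- weighted mean of the updated parameters
    (μ : E) (hμ : μ = (∑ j, lam j)⁻¹ • ∑ i, lam i • ω i Q) :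
    (∑ j, lam j)⁻¹ * ∑ i, lam i * (f i μ - f i (ω i Q)) ≤ η * B * Q * U ^ 2 := by
  have hw₀ : ∀ i ∈ univ, 0 ≤ lam i := fun i _ => (hlam i).le
  have hΛ : 0 < ∑ j, lam j := sum_pos (fun i _ => hlam i) (univ_nonempty_iff.2 ⟨⟨0, hm⟩⟩)
  have hgbar_le (q : ℕ) : ‖gbar q‖ ≤ U := by
    rw [hgbar]; exact norm_centerMass_le_s6 hw₀ hΛ fun i _ => hbdd _ _
  set M : ℕ → E := fun q => univ.centerMass lam fun i => ω i q
  have hM0 : M 0 = Ω := by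
    simp only [M, hω0]
    exact univ.centerMass_const hΛ.ne' Ω
  have hMs (q : ℕ) : M (q + 1) = M q - η • gbar q := by
    simp only [M, hωs, centerMass_sub_s6, centerMass_smul, hgbar]; rfl
  have hdrift (i : Fin m) : ‖μ - ω i Q‖ ≤ η * (Q * (B * U)) := by
    have hμM : μ = M Q := hμ
    rw [hμM]
    refine (norm_sub_le_of_descent hη (hM0.trans (hω0 i).symm) hMs (hωs i) Q).trans ?_
    gcongr
    simpa using sum_le_card_nsmul (range Q) _ (B * U) fun q hq =>
      (hclu i q (mem_range.1 hq)).trans (mul_le_mul_of_nonneg_left (hgbar_le q) hB)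
  have hclient (i : Fin m) : f i μ - f i (ω i Q) ≤ η * B * Q * U ^ 2 :=
    calc f i μ - f i (ω i Q) ≤ inner ℝ (f' i μ) (μ - ω i Q) :=
          (hconv i).sub_le_inner_of_hasGradientAt trivial trivial (hgrad i μ)
      _ ≤ ‖f' i μ‖ * ‖μ - ω i Q‖ := real_inner_le_norm _ _
      _ ≤ U * (η * (Q * (B * U))) := mul_le_mul (hbdd i μ) (hdrift i) (norm_nonneg _) hU
      _ = η * B * Q * U ^ 2 := by ring
  exact (convex_Iic (η * B * Q * U ^ 2)).centerMass_mem hw₀ hΛ fun i _ => hclient i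

/-- Lemma 4 of WeCFL: under convexity, gradients bounded by U, and the
clusterability condition with measure B at every local step, the weighted
federated loss at the aggregated (weighted mean) model exceeds the weighted
loss at the individual client models by at most η·B·Q·U². -/
theorem wecfl_aggregation_loss_bound
    {E : Type*} [NormedAddCommGroup E] [InnerProductSpace ℝ E] [CompleteSpace E]
    {m Q : ℕ} (hm : 0 < m) (hQ : 0 < Q)
    (lam : Fin m → ℝ) (hlam : ∀ i, 0 < lam i)
    (η B U : ℝ) (hη : 0 ≤ η) (hB : 0 ≤ B) (hU : 0 ≤ U)
    (Ω : E)
    (f : Fin m → E → ℝ) (f' : Fin m → E → E)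
    (hconv : ∀ i, ConvexOn ℝ Set.univ (f i))
    (hgrad : ∀ i x, HasGradientAt (f i) (f' i x) x)
    (hbdd : ∀ i x, ‖f' i x‖ ≤ U)
    -- Q gradient descent steps from Ω for each client
    (ω : Fin m → ℕ → E)
    (hω0 : ∀ i, ω i 0 = Ω)
    (hωs : ∀ i q, ω i (q + 1) = ω i q - η • f' i (ω i q))
    -- weighted-average update direction at each step
    (gbar : ℕ → E)
    (hgbar : ∀ q, gbar q = (∑ j, lam j)⁻¹ • ∑ p, lam p • f' p (ω p q))
    -- clusterability condition at every local step
    (hclu : ∀ i : Fin m, ∀ q < Q, ‖gbar q - f' i (ω i q)‖ ≤ B * ‖gbar q‖)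
    -- weighted mean of the updated parameters
    (μ : E) (hμ : μ = (∑ j, lam j)⁻¹ • ∑ i, lam i • ω i Q) :
    (∑ j, lam j)⁻¹ * ∑ i, lam i * (f i μ - f i (ω i Q)) ≤ η * B * Q * U ^ 2 :=
  wecfl_aggregation_loss_bound_general hm lam hlam η B U hη hB hU Ω f f' hconv hgrad hbdd ω hω0 hωs
    gbar hgbar hclu μ hμ
end
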